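/- arXiv:2006.02134 — 8 statements merged into one kernel-verified Lean document; each statement's English description precedes it below -/
import Mathlib

section
/- Let S[i..j] be a window of a string S with i ≥ 1, and let P denote the set of distinct nonempty palindromic substrings. Then the set difference DPal(S[i-1..j]) \ DPal(S[i..j]) contains at most one element, namely (if it is nonempty) the longest palindromic prefix of S[i-1..j]. -/
/-- The substring `S[i..j]` (0-indexed, inclusive). -/
def window {α : Type*} (S : List α) (i j : ℕ) : List α :=
  (S.drop i).take (j + 1 - i)

/-- The set of distinct nonempty palindromic substrings of `T`. -/
def DPal {α : Type*} (T : List α) : Set (List α) :=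
  {w | w ≠ [] ∧ w.reverse = w ∧ w <:+: T}

/-- `p` is the longest palindromic prefix of `T`. -/
def IsLpp {α : Type*} (T p : List α) : Prop :=
  p <+: T ∧ p.reverse = p ∧ ∀ q, q <+: T → q.reverse = q → q.length ≤ p.length

lemma diff_lpp {α : Type*} (c : α) (T' : List α) :
    ∀ w ∈ DPal (c :: T') \ DPal T', IsLpp (c :: T') w := by
  rintro w ⟨⟨hne, hpal, hinf⟩, hnot⟩
  have hpre : w <+: (c :: T') := by
    obtain ⟨s, t, hst⟩ := hinf
    cases s with
    | nil => exact ⟨t, by simpa using hst⟩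
    | cons a s' =>
      exfalso
      apply hnot
      refine ⟨hne, hpal, ?_⟩
      simp only [List.cons_append] at hst
      exact ⟨s', t, (List.cons_eq_cons.mp hst).2⟩
  refine ⟨hpre, hpal, ?_⟩
  intro q hq hqpal
  by_contra hlen
  push_neg at hlen
  have hwq : w <+: q := List.prefix_of_prefix_length_le hpre hq hlen.le
  have hws : w <:+ q := by
    rw [← hpal, ← hqpal]
    exact List.reverse_suffix.mpr hwq
  obtain ⟨u, hu⟩ := hws
  cases u with
  | nil =>
    simp only [List.nil_append] at hu
    subst hu
    exact absurd rfl hlen.ne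
  | cons a u' =>
    obtain ⟨r, hr⟩ := hq
    apply hnot
    refine ⟨hne, hpal, u', r, ?_⟩
    have : (a :: u') ++ w ++ r = c :: T' := by rw [hu]; exact hr
    simp only [List.cons_append] at this
    exact (List.cons_eq_cons.mp this).2

theorem dpal_diff_subsingleton_is_lpp {α : Type*} (S : List α) (i j : ℕ)
    (hi : 1 ≤ i) (hij : i ≤ j) (hj : j < S.length) :
    (DPal (window S (i-1) j) \ DPal (window S i j)).Subsingleton ∧
    ∀ w ∈ DPal (window S (i-1) j) \ DPal (window S i j),
      IsLpp (window S (i-1) j) w := by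
  have hi1 : i - 1 < S.length := by omega
  have hwin : window S (i-1) j = S[i-1] :: window S i j := by
    unfold window
    rw [List.drop_eq_getElem_cons hi1]
    have h1 : i - 1 + 1 = i := by omega
    have h2 : j + 1 - (i - 1) = (j + 1 - i) + 1 := by omega
    rw [h1, h2, List.take_succ_cons]
  have hlpp : ∀ w ∈ DPal (window S (i-1) j) \ DPal (window S i j),
      IsLpp (window S (i-1) j) w := by
    rw [hwin]
    exact diff_lpp _ _
  refine ⟨?_, hlpp⟩
  intro w1 h1 w2 h2
  obtain ⟨hp1, _, hl1⟩ := hlpp w1 h1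
  obtain ⟨hp2, hpal2, hl2⟩ := hlpp w2 h2
  have hle : w1.length ≤ w2.length := hl2 w1 hp1 (hlpp w1 h1).2.1
  have hge : w2.length ≤ w1.length := hl1 w2 hp2 hpal2
  have h12 : w1 <+: w2 := List.prefix_of_prefix_length_le hp1 hp2 hle
  exact h12.eq_of_length (le_antisymm hle hge)
end

section
/- A nonempty palindrome w is removed from the set of distinct palindromic substrings when the leftmost character is deleted—i.e., w is a palindromic substring of T = S[i-1..j-1] but not of S[i..j-1]—if and only if w is unique in T and w equals the longest palindromic prefix of T. -/
def occCount {α : Type*} [DecidableEq α] (S w : List α) : ℕ :=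
  ((List.range (S.length + 1)).filter (fun i => decide (w <+: S.drop i))).length

/-!
Deleting the first character of `T` destroys the palindrome `w` exactly when every occurrence of
`w` in `T` starts at position 0, i.e. `w` is a prefix occurring once. Such a `w` is the longest
palindromic prefix: a longer palindromic prefix `q` has `w` as a prefix, hence, both being
palindromes, as a suffix, which is a second occurrence.
-/

namespace List

variable {α : Type*}

theorem Nodup.length_eq_one_iff {l : List α} {a : α} (hl : l.Nodup) (ha : a ∈ l) :
    l.length = 1 ↔ ∀ b ∈ l, b = a := by
  constructor
  · intro h
    obtain ⟨c, rfl⟩ := List.length_eq_one_iff.mp h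
    simp_all
  · intro h
    rw [eq_replicate_iff.mpr ⟨rfl, h⟩, nodup_replicate] at hl
    have := length_pos_of_mem ha
    omega

theorem infix_iff_exists_prefix_drop {w T : List α} : w <:+: T ↔ ∃ p, w <+: T.drop p := by
  rw [infix_iff_prefix_suffix]
  constructor
  · rintro ⟨t, hwt, htT⟩
    exact ⟨T.length - t.length, suffix_iff_eq_drop.mp htT ▸ hwt⟩
  · rintro ⟨p, hp⟩
    exact ⟨T.drop p, hp, drop_suffix p T⟩

theorem lt_length_of_prefix_drop {w T : List α} {p : ℕ} (hw : w ≠ []) (h : w <+: T.drop p) :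
    p < T.length := by
  by_contra! hp
  rw [drop_eq_nil_of_le hp, prefix_nil] at h
  exact hw h

theorem infix_drop_one_of_ne_nil {s w : List α} (t : List α) (hs : s ≠ []) :
    w <:+: (s ++ w ++ t).drop 1 := by
  have hlen : 1 ≤ s.length := length_pos_iff.mpr hs
  rw [drop_append_of_le_length (by rw [length_append]; omega), drop_append_of_le_length hlen]
  exact infix_append _ _ _

theorem prefix_of_infix_of_not_infix_drop_one {w T : List α} (hinf : w <:+: T)
    (hnot : ¬ w <:+: T.drop 1) : w <+: T := by
  obtain ⟨s, t, rfl⟩ := hinf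
  rcases s with _ | ⟨a, s⟩
  · exact ⟨t, rfl⟩
  · exact absurd (infix_drop_one_of_ne_nil t (cons_ne_nil a s)) hnot

end List

open List

section

variable {α : Type*}

theorem window_succ_left (S : List α) (i j : ℕ) : window S (i + 1) j = (window S i j).drop 1 := by
  unfold window
  rw [drop_take, drop_drop, Nat.sub_sub]

theorem isLpp_of_not_infix_drop_one {w T : List α} (hpre : w <+: T) (hwpal : w.reverse = w)
    (hnot : ¬ w <:+: T.drop 1) : IsLpp T w := by
  refine ⟨hpre, hwpal, fun q hq hqpal => ?_⟩
  by_contra! hlt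
  have hsuf : w <:+ q := by
    rw [← reverse_prefix, hwpal, hqpal]
    exact prefix_of_prefix_length_le hpre hq hlt.le
  obtain ⟨u, rfl⟩ := hsuf
  obtain ⟨v, rfl⟩ := hq
  have hu : u ≠ [] := by
    rintro rfl
    simp at hlt
  exact hnot (infix_drop_one_of_ne_nil v hu)

theorem occCount_eq_one_iff [DecidableEq α] {w T : List α} (hw : w ≠ []) (hpre : w <+: T) :
    occCount T w = 1 ↔ ¬ w <:+: T.drop 1 := by
  have hzero : 0 ∈ (range (T.length + 1)).filter (fun p => decide (w <+: T.drop p)) := by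
    simpa using hpre
  rw [occCount, (nodup_range.filter _).length_eq_one_iff hzero, infix_iff_exists_prefix_drop]
  simp only [mem_filter, mem_range, decide_eq_true_eq, drop_drop, not_exists, and_imp]
  constructor
  · intro h p hp
    have := h _ (by have := lt_length_of_prefix_drop hw hp; omega) hp
    omega
  · intro h p _ hp
    obtain _ | p := p
    · rfl
    · exact absurd (Nat.add_comm p 1 ▸ hp) (h p)

theorem removed_iff_occCount_eq_one_and_isLpp [DecidableEq α] {w : List α} (T : List α)
    (hw : w ≠ []) (hwpal : w.reverse = w) :
    (w <:+: T ∧ ¬ w <:+: T.drop 1) ↔ (occCount T w = 1 ∧ IsLpp T w) := by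
  constructor
  · rintro ⟨hinf, hnot⟩
    have hpre := prefix_of_infix_of_not_infix_drop_one hinf hnot
    exact ⟨(occCount_eq_one_iff hw hpre).mpr hnot, isLpp_of_not_infix_drop_one hpre hwpal hnot⟩
  · rintro ⟨hocc, hpre, -⟩
    exact ⟨hpre.isInfix, (occCount_eq_one_iff hw hpre).mp hocc⟩

end

theorem removed_palindrome_iff_general {α : Type*} [DecidableEq α]
    (S w : List α) (i j : ℕ) (hi : 1 ≤ i)
    (hw : w ≠ []) (hwpal : w.reverse = w) :
    (w <:+: window S (i-1) (j-1) ∧ ¬ w <:+: window S i (j-1)) ↔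
    (occCount (window S (i-1) (j-1)) w = 1 ∧ IsLpp (window S (i-1) (j-1)) w) := by
  obtain ⟨k, rfl⟩ : ∃ k, i = k + 1 := ⟨i - 1, by omega⟩
  rw [Nat.add_sub_cancel, window_succ_left]
  exact removed_iff_occCount_eq_one_and_isLpp _ hw hwpal

theorem removed_palindrome_iff {α : Type*} [DecidableEq α]
    (S w : List α) (i j : ℕ) (hi : 1 ≤ i) (hij : i ≤ j) (hj : j ≤ S.length)
    (hw : w ≠ []) (hwpal : w.reverse = w) :
    (w <:+: window S (i-1) (j-1) ∧ ¬ w <:+: window S i (j-1)) ↔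
    (occCount (window S (i-1) (j-1)) w = 1 ∧ IsLpp (window S (i-1) (j-1)) w) :=
  removed_palindrome_iff_general S w i j hi hw hwpal
end

section
/- If a palindromic substring w of a string S is not left-maximal in S (i.e., there exists a palindromic substring w' of S containing w as a proper suffix), then w occurs at least twice in S. -/
theorem List.IsSuffix.isPrefix_of_reverse_eq {α : Type*} {w w' : List α} (h : w <:+ w')
    (hw : w.reverse = w) (hw' : w'.reverse = w') : w <+: w' := by
  rw [← hw, ← hw']
  exact List.reverse_prefix.mpr h

section Occurrences

variable {α : Type*} [DecidableEq α] {S w : List α}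

theorem length_mem_occurrences_of_append_eq {u v : List α} (h : u ++ w ++ v = S) :
    u.length ∈ (List.range (S.length + 1)).filter (fun i => decide (w <+: S.drop i)) := by
  subst h
  simp only [List.mem_filter, List.mem_range, List.length_append, List.append_assoc,
    List.drop_left, decide_eq_true_eq]
  exact ⟨by omega, List.prefix_append w v⟩

theorem two_le_occCount_of_append_eq {u₁ v₁ u₂ v₂ : List α} (h₁ : u₁ ++ w ++ v₁ = S)
    (h₂ : u₂ ++ w ++ v₂ = S) (hne : u₁.length ≠ u₂.length) : 2 ≤ occCount S w :=
  calc 2 ≤ _ := Finset.one_lt_card.mpr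
          ⟨_, List.mem_toFinset.mpr (length_mem_occurrences_of_append_eq h₁),
            _, List.mem_toFinset.mpr (length_mem_occurrences_of_append_eq h₂), hne⟩
    _ ≤ occCount S w := List.toFinset_card_le _

end Occurrences

theorem not_left_maximal_repeats_general {α : Type*} [DecidableEq α]
    (S w : List α) (hwpal : w.reverse = w)
    (h : ∃ w', w' <:+: S ∧ w'.reverse = w' ∧ w <:+ w' ∧ w ≠ w') :
    2 ≤ occCount S w := by
  obtain ⟨w', ⟨a, b, hS⟩, hpal', hsuf, hne⟩ := h
  obtain ⟨s, hs⟩ := hsuf.isPrefix_of_reverse_eq hwpal hpal'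
  obtain ⟨t, ht⟩ := hsuf
  have ht_ne : t ≠ [] := by
    rintro rfl
    exact hne (by simpa using ht)
  refine two_le_occCount_of_append_eq (u₁ := a) (v₁ := s ++ b) (u₂ := a ++ t) (v₂ := b)
    (by rw [← hS, ← hs]; simp) (by rw [← hS, ← ht]; simp) ?_
  simpa using ht_ne

theorem not_left_maximal_repeats {α : Type*} [DecidableEq α]
    (S w : List α) (hw : w <:+: S) (hwpal : w.reverse = w)
    (h : ∃ w', w' <:+: S ∧ w'.reverse = w' ∧ w <:+ w' ∧ w ≠ w') :
    2 ≤ occCount S w :=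
  not_left_maximal_repeats_general S w hwpal h
end

section
/- Every unique palindromic substring of a string S is left-maximal in S: if a palindromic substring w of S occurs exactly once in S, then no palindromic substring of S contains w as a proper suffix. -/
/-!
If `w` is a proper suffix `w' = u ++ w` of a palindrome `w'`, then reversing shows that `w` is
also a prefix of `w'`. Hence `w` occurs in `S` both where `w'` starts and `u.length` positions
later, and these two occurrences are distinct because `u ≠ []`.
-/

namespace List

variable {α : Type*}

theorem IsSuffix.isPrefix_of_reverse_eq_s6 {w w' : List α} (h : w <:+ w') (hw : w.reverse = w)
    (hw' : w'.reverse = w') : w <+: w' := by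
  rw [← hw, ← hw']
  exact reverse_prefix.mpr h

theorem IsInfix.exists_isPrefix_drop {l₁ l₂ : List α} (h : l₁ <:+: l₂) :
    ∃ i, i + l₁.length ≤ l₂.length ∧ l₁ <+: l₂.drop i := by
  obtain ⟨s, t, rfl⟩ := h
  exact ⟨s.length, by simp, by simp⟩

theorem IsPrefix.drop_add_length {u w l : List α} {i : ℕ} (h : u ++ w <+: l.drop i) :
    w <+: l.drop (i + u.length) := by
  obtain ⟨t, ht⟩ := h
  rw [← drop_drop, ← ht, append_assoc, drop_left]
  exact prefix_append w t

end List

theorem eq_of_occCount_eq_one {α : Type*} [DecidableEq α] {S w : List α}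
    (h : occCount S w = 1) {i j : ℕ} (hi : i ≤ S.length) (hj : j ≤ S.length)
    (hwi : w <+: S.drop i) (hwj : w <+: S.drop j) : i = j := by
  obtain ⟨k, hk⟩ := List.length_eq_one_iff.mp h
  have mem_occ : ∀ m, m ≤ S.length → w <+: S.drop m →
      m ∈ (List.range (S.length + 1)).filter (fun i => decide (w <+: S.drop i)) := by
    intro m hm hwm
    simpa [Nat.lt_succ_iff] using ⟨hm, hwm⟩
  have hik := mem_occ i hi hwi
  have hjk := mem_occ j hj hwj
  rw [hk, List.mem_singleton] at hik hjk
  rw [hik, hjk]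

theorem unique_palindrome_is_left_maximal_general {α : Type*} [DecidableEq α]
    (S w : List α) (hwpal : w.reverse = w)
    (huniq : occCount S w = 1) :
    ¬ ∃ w', w' <:+: S ∧ w'.reverse = w' ∧ w <:+ w' ∧ w ≠ w' := by
  rintro ⟨w', hinf, hpal', hsuf, hne⟩
  obtain ⟨u, rfl⟩ := hsuf
  obtain ⟨i, hi, hpre⟩ := hinf.exists_isPrefix_drop
  have hfirst : w <+: S.drop i :=
    ((List.suffix_append u w).isPrefix_of_reverse_eq_s6 hwpal hpal').trans hpre
  have hsecond : w <+: S.drop (i + u.length) := hpre.drop_add_length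
  have hlen : (u ++ w).length = u.length + w.length := List.length_append
  have hsame := eq_of_occCount_eq_one huniq (by omega) (by omega) hfirst hsecond
  have hu : u = [] := List.length_eq_zero_iff.mp (by omega)
  exact hne (by simp [hu])

theorem unique_palindrome_is_left_maximal {α : Type*} [DecidableEq α]
    (S w : List α) (hw : w <:+: S) (hwpal : w.reverse = w)
    (huniq : occCount S w = 1) :
    ¬ ∃ w', w' <:+: S ∧ w'.reverse = w' ∧ w <:+ w' ∧ w ≠ w' :=
  unique_palindrome_is_left_maximal_general S w hwpal huniq
end

section
/- Each new character appended to a string adds at most one new distinct palindromic substring: for any string S and character c, |DPal(S·c) \ DPal(S)| ≤ 1, and if the difference is nonempty, its unique element is the longest palindromic suffix of S·c. -/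
/-- `p` is the longest palindromic suffix of `T`. -/
def IsLps {α : Type*} (T p : List α) : Prop :=
  p <:+ T ∧ p.reverse = p ∧ ∀ q, q <:+ T → q.reverse = q → q.length ≤ p.length

lemma infix_of_strict {α : Type*} {S w t u : List α} {c : α} (hne : t ≠ [])
    (h : u ++ (w ++ t) = S ++ [c]) : w <:+: S := by
  obtain rfl | ⟨t', d, rfl⟩ := t.eq_nil_or_concat
  · exact absurd rfl hne
  · have h' : (u ++ w ++ t') ++ [d] = S ++ [c] := by
      simpa [List.append_assoc] using h
    have := List.append_inj' h' rfl
    exact ⟨u, t', this.1⟩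

lemma lps_of_mem_diff {α : Type*} {S : List α} {c : α} {w : List α}
    (hw : w ∈ DPal (S ++ [c]) \ DPal S) : IsLps (S ++ [c]) w := by
  obtain ⟨⟨hne, hpal, hinf⟩, hnot⟩ := hw
  -- w is a suffix of S ++ [c]
  have hsuf : w <:+ S ++ [c] := by
    obtain ⟨l, r, hr⟩ := hinf
    rcases eq_or_ne r [] with rfl | hrne
    · exact ⟨l, by simpa using hr⟩
    · exact absurd ⟨hne, hpal, infix_of_strict hrne (by simpa [List.append_assoc] using hr)⟩ hnot
  refine ⟨hsuf, hpal, fun q hq hqpal => ?_⟩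
  by_contra hlen
  push_neg at hlen
  -- w is a suffix of q since both suffixes and |w| < |q|
  have hwq : w <:+ q := by
    rcases List.suffix_or_suffix_of_suffix hsuf hq with h | h
    · exact h
    · exact absurd (List.IsSuffix.length_le h) (by omega)
  -- by palindromicity, w is a prefix of q
  have hpre : w <+: q := by
    have := List.reverse_prefix.mpr hwq
    rwa [hpal, hqpal] at this
  obtain ⟨t, rfl⟩ := hpre
  have htne : t ≠ [] := by
    intro h; subst h; simp at hlen
  obtain ⟨u, hu⟩ := hq
  exact hnot ⟨hne, hpal, infix_of_strict htne hu⟩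

theorem append_adds_at_most_one_palindrome {α : Type*} (S : List α) (c : α) :
    (DPal (S ++ [c]) \ DPal S).Subsingleton ∧
    ∀ w ∈ DPal (S ++ [c]) \ DPal S, IsLps (S ++ [c]) w := by
  refine ⟨?_, fun w hw => lps_of_mem_diff hw⟩
  intro w₁ h₁ w₂ h₂
  obtain ⟨hs₁, hp₁, hm₁⟩ := lps_of_mem_diff h₁
  obtain ⟨hs₂, hp₂, hm₂⟩ := lps_of_mem_diff h₂
  have hlen : w₁.length = w₂.length :=
    le_antisymm (hm₂ w₁ hs₁ hp₁) (hm₁ w₂ hs₂ hp₂)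
  rcases List.suffix_or_suffix_of_suffix hs₁ hs₂ with h | h
  · exact List.IsSuffix.eq_of_length h hlen
  · exact (List.IsSuffix.eq_of_length h hlen.symm).symm
end

section
/- The number of MAPWs of a string S over an alphabet of size σ is at most (p+1)·σ, where p is the number of distinct palindromic substrings of S including the empty string. -/
/-!
A MAPW `w` is nonempty (the empty word occurs in `S`), so as a palindrome it is either a single
letter `c` or `c :: (u ++ [c])` with `u` a palindrome; minimality makes `u` an infix of `S`.
Hence every MAPW is determined by a letter and an element of `DPal(S)` or the marker `none`.
-/

/-- `w` is a minimal absent palindromic word of `S`. -/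
def IsMAPW {α : Type*} (S w : List α) : Prop :=
  w.reverse = w ∧ ¬ w <:+: S ∧ (w.drop 1).dropLast <:+: S

open List

section

variable {α : Type*}

/-- `none` in place of `u` stands for the single letter `c`. -/
def mapwCandidate : Option (List α) × α → List α
  | (none, c) => [c]
  | (some u, c) => c :: (u ++ [c])

section DecidableEq

variable [DecidableEq α]

/-- The paper's `DPal(S)`, listed without duplicates. -/
def palindromicInfixes (S : List α) : List (List α) :=
  ((S.tails.flatMap List.inits).filter (fun w => w.reverse == w)).dedup

theorem mem_palindromicInfixes {S u : List α} :
    u ∈ palindromicInfixes S ↔ u.reverse = u ∧ u <:+: S := by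
  simp only [palindromicInfixes, mem_dedup, mem_filter, mem_flatMap, mem_tails, mem_inits,
    beq_iff_eq, infix_iff_prefix_suffix]
  exact ⟨fun ⟨⟨t, hS, hu⟩, hpal⟩ => ⟨hpal, t, hu, hS⟩,
    fun ⟨hpal, t, hu, hS⟩ => ⟨⟨t, hS, hu⟩, hpal⟩⟩

end DecidableEq

theorem IsMAPW.eq_singleton_or_eq_cons_append {S w : List α} (hw : IsMAPW S w) :
    (∃ c, w = [c]) ∨ ∃ c u, u.reverse = u ∧ u <:+: S ∧ w = c :: (u ++ [c]) := by
  obtain ⟨hpal, hnotS, hmid⟩ := hw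
  cases Palindrome.of_reverse_eq hpal with
  | nil => exact absurd nil_infix hnotS
  | singleton c => exact Or.inl ⟨c, rfl⟩
  | cons_concat c hu => exact Or.inr ⟨c, _, hu.reverse_eq, by simpa using hmid, rfl⟩

theorem setOf_isMAPW_subset_image [Fintype α] [DecidableEq α] (S : List α) :
    {w | IsMAPW S w} ⊆
      ((palindromicInfixes S).toFinset.insertNone ×ˢ Finset.univ).image mapwCandidate := by
  intro w hw
  simp only [Finset.coe_image, Finset.coe_product, Finset.coe_univ, Set.prod_univ]
  rcases hw.eq_singleton_or_eq_cons_append with ⟨c, rfl⟩ | ⟨c, u, hpal, hS, rfl⟩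
  · exact ⟨(none, c), by simp, rfl⟩
  · exact ⟨(some u, c), by simpa using mem_palindromicInfixes.mpr ⟨hpal, hS⟩, rfl⟩

end

theorem mapw_count_bound {α : Type*} [Fintype α] [DecidableEq α] (S : List α) :
    {w : List α | IsMAPW S w}.Finite ∧
    {w : List α | IsMAPW S w}.ncard ≤
      (((S.tails.flatMap List.inits).filter (fun w => w.reverse == w)).dedup.length + 1)
        * Fintype.card α := by
  have hsub := setOf_isMAPW_subset_image S
  refine ⟨(Finset.finite_toSet _).subset hsub, ?_⟩
  change _ ≤ ((palindromicInfixes S).length + 1) * Fintype.card α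
  calc {w | IsMAPW S w}.ncard
      ≤ (((palindromicInfixes S).toFinset.insertNone ×ˢ Finset.univ).image mapwCandidate).card :=
        (Set.ncard_le_ncard hsub (Finset.finite_toSet _)).trans_eq (Set.ncard_coe_finset _)
    _ ≤ ((palindromicInfixes S).toFinset.insertNone ×ˢ (Finset.univ : Finset α)).card :=
        Finset.card_image_le
    _ = ((palindromicInfixes S).length + 1) * Fintype.card α := by
        rw [Finset.card_product, Finset.card_insertNone, Finset.card_univ,
          toFinset_card_of_nodup (l := palindromicInfixes S) (nodup_dedup _)]
end

section
/- Let T be a nonempty string. If the longest palindromic prefix of T equals T itself (T is a palindrome) and T occurs exactly once in T (trivially true), then deleting the first character removes exactly the palindromes of DPal(T) that are unique in T and equal to lpp(T); in particular |DPal(T) \ DPal(T[1..|T|-1])| ≤ 1. -/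
namespace List

variable {α : Type*}

theorem IsPrefix.isSuffix_of_reverse_eq {w T : List α} (h : w <+: T) (hw : w.reverse = w)
    (hT : T.reverse = T) : w <:+ T := by
  rw [← hw, ← hT]
  exact reverse_suffix.mpr h

theorem IsInfix.isInfix_tail_of_reverse_eq {w T : List α} (h : w <:+: T) (hw : w.reverse = w)
    (hT : T.reverse = T) (hne : w ≠ T) : w <:+: T.tail := by
  cases T with
  | nil => exact absurd (eq_nil_of_infix_nil h) hne
  | cons a t =>
    rcases infix_cons_iff.mp h with hpre | hinf
    · rcases suffix_cons_iff.mp (hpre.isSuffix_of_reverse_eq hw hT) with heq | hsuf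
      · exact absurd heq hne
      · exact hsuf.isInfix
    · exact hinf

theorem not_infix_tail_self_of_ne_nil {T : List α} (hT : T ≠ []) : ¬ T <:+: T.tail := by
  intro h
  have := h.length_le
  rw [length_tail] at this
  have := length_pos_iff.mpr hT
  omega

end List

section Palindromes

variable {α : Type*}

theorem self_notMem_DPal_drop_one (T : List α) : T ∉ DPal (T.drop 1) := by
  rintro ⟨hne, -, hinf⟩
  rw [List.drop_one] at hinf
  exact List.not_infix_tail_self_of_ne_nil hne hinf

theorem eq_of_mem_DPal_of_notMem_DPal_drop_one {T w : List α} (hT : T.reverse = T)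
    (hw : w ∈ DPal T) (hdel : w ∉ DPal (T.drop 1)) : w = T := by
  obtain ⟨hne, hwpal, hinf⟩ := hw
  by_contra hwT
  rw [List.drop_one] at hdel
  exact hdel ⟨hne, hwpal, hinf.isInfix_tail_of_reverse_eq hwpal hT hwT⟩

theorem occCount_self [DecidableEq α] (T : List α) : occCount T T = 1 := by
  have hfilter : (List.range (T.length + 1)).filter (fun i => decide (T <+: T.drop i)) = [0] := by
    rw [List.range_succ_eq_map, List.filter_cons_of_pos (by simp), List.filter_eq_nil_iff.mpr]
    simp only [List.mem_map, List.mem_range, decide_eq_true_eq]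
    rintro _ ⟨j, hj, rfl⟩ hpre
    have := hpre.length_le
    rw [List.length_drop] at this
    omega
  rw [occCount, hfilter, List.length_singleton]

theorem isLpp_self_of_reverse_eq {T : List α} (hT : T.reverse = T) : IsLpp T T :=
  ⟨List.prefix_refl T, hT, fun _ hq _ => hq.length_le⟩

theorem IsLpp.eq_of_reverse_eq {T p : List α} (h : IsLpp T p) (hT : T.reverse = T) : p = T :=
  h.1.eq_of_length (le_antisymm h.1.length_le (h.2.2 T (List.prefix_refl T) hT))

end Palindromes

theorem deletion_removes_exactly_unique_lpp_general {α : Type*} [DecidableEq α]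
    (T : List α) (hpal : T.reverse = T) :
    (∀ w ∈ DPal T, (w ∉ DPal (T.drop 1) ↔ (occCount T w = 1 ∧ IsLpp T w))) ∧
    (DPal T \ DPal (T.drop 1)).Subsingleton := by
  have removed_eq_self : ∀ w ∈ DPal T \ DPal (T.drop 1), w = T :=
    fun w hw => eq_of_mem_DPal_of_notMem_DPal_drop_one hpal hw.1 hw.2
  refine ⟨fun w hw => ⟨fun hdel => ?_, fun ⟨_, hlpp⟩ => ?_⟩, fun x hx y hy => ?_⟩
  · obtain rfl := removed_eq_self w ⟨hw, hdel⟩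
    exact ⟨occCount_self w, isLpp_self_of_reverse_eq hpal⟩
  · obtain rfl := hlpp.eq_of_reverse_eq hpal
    exact self_notMem_DPal_drop_one w
  · rw [removed_eq_self x hx, removed_eq_self y hy]

theorem deletion_removes_exactly_unique_lpp {α : Type*} [DecidableEq α]
    (T : List α) (hT : T ≠ []) (hpal : T.reverse = T) :
    (∀ w ∈ DPal T, (w ∉ DPal (T.drop 1) ↔ (occCount T w = 1 ∧ IsLpp T w))) ∧
    (DPal T \ DPal (T.drop 1)).Subsingleton :=
  deletion_removes_exactly_unique_lpp_general T hpal
end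

section
/- For any string S and any position e, among all palindromic suffixes of S[0..e] that are strictly longer than a given palindromic suffix w of S[0..e], if the set is nonempty and v is the shortest such, then the longest palindromic suffix of v equals w. -/
theorem shortest_longer_palindromic_suffix {α : Type*} (S : List α) (e : ℕ)
    (w v : List α)
    (hw : w <:+ S.take (e+1)) (hwpal : w.reverse = w)
    (hv : v <:+ S.take (e+1)) (hvpal : v.reverse = v)
    (hlen : w.length < v.length)
    (hmin : ∀ v', v' <:+ S.take (e+1) → v'.reverse = v' →
      w.length < v'.length → v.length ≤ v'.length) :
    w <:+ v ∧ w ≠ v ∧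
      ∀ u, u <:+ v → u.reverse = u → u ≠ v → u.length ≤ w.length := by
  have hwv : w <:+ v := by
    rcases List.suffix_or_suffix_of_suffix hw hv with h | h
    · exact h
    · exact absurd (h.length_le) (by omega)
  refine ⟨hwv, ?_, ?_⟩
  · intro h; subst h; omega
  · intro u hu hupal hne
    by_contra hc
    push_neg at hc
    have h1 : v.length ≤ u.length := hmin u (hu.trans hv) hupal hc
    have h2 : u.length ≤ v.length := hu.length_le
    exact hne (hu.eq_of_length (by omega))
end
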